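/- For a symmetric positive definite N×N matrix M, the potential J(v) = 2 Tr((D_v^{1/2} M D_v^{1/2})^{1/2}) - Σᵢ vᵢ satisfies J(v) ≤ 2√(N (maxᵢ Mᵢᵢ) ‖v‖₁) - ‖v‖₁ for all v ≥ 0, and hence J(v) → -∞ as ‖v‖₁ → ∞. -/

import Mathlib

open Matrix Real Filter

noncomputable def msqrt {N : ℕ} (A : Matrix (Fin N) (Fin N) ℝ) : Matrix (Fin N) (Fin N) ℝ :=
  letI := Classical.dec A.PosSemidef
  if h : A.PosSemidef then
    (h.1.eigenvectorUnitary : Matrix (Fin N) (Fin N) ℝ) * diagonal (Real.sqrt ∘ h.1.eigenvalues) *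
      (star h.1.eigenvectorUnitary : Matrix (Fin N) (Fin N) ℝ) else 0

noncomputable def dhalf {N : ℕ} (v : Fin N → ℝ) : Matrix (Fin N) (Fin N) ℝ :=
  Matrix.diagonal fun i => Real.sqrt (v i)

noncomputable def Matrix.PosSemidef.sqrt {N : ℕ} {A : Matrix (Fin N) (Fin N) ℝ}
    (h : A.PosSemidef) : Matrix (Fin N) (Fin N) ℝ :=
  (h.1.eigenvectorUnitary : Matrix (Fin N) (Fin N) ℝ) * diagonal (Real.sqrt ∘ h.1.eigenvalues) *
    (star h.1.eigenvectorUnitary : Matrix (Fin N) (Fin N) ℝ)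

lemma Matrix.PosSemidef.posSemidef_sqrt {N : ℕ} {A : Matrix (Fin N) (Fin N) ℝ}
    (h : A.PosSemidef) : h.sqrt.PosSemidef := by
  have hd : (diagonal (Real.sqrt ∘ h.1.eigenvalues)).PosSemidef :=
    posSemidef_diagonal_iff.mpr fun i => Real.sqrt_nonneg _
  have := hd.mul_mul_conjTranspose_same (h.1.eigenvectorUnitary : Matrix (Fin N) (Fin N) ℝ)
  unfold Matrix.PosSemidef.sqrt
  simpa [Matrix.star_eq_conjTranspose] using this

lemma Matrix.PosSemidef.sqrt_mul_self {N : ℕ} {A : Matrix (Fin N) (Fin N) ℝ}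
    (h : A.PosSemidef) : h.sqrt * h.sqrt = A := by
  set U : Matrix (Fin N) (Fin N) ℝ := h.1.eigenvectorUnitary.1 with hU
  have hUU : (star h.1.eigenvectorUnitary : Matrix (Fin N) (Fin N) ℝ) * U = 1 :=
    Unitary.coe_star_mul_self _
  have hspec := h.1.spectral_theorem
  rw [Unitary.conjStarAlgAut_apply] at hspec
  unfold Matrix.PosSemidef.sqrt
  rw [← hU]
  calc U * diagonal (Real.sqrt ∘ h.1.eigenvalues) * (star h.1.eigenvectorUnitary : Matrix (Fin N) (Fin N) ℝ)
        * (U * diagonal (Real.sqrt ∘ h.1.eigenvalues) * (star h.1.eigenvectorUnitary : Matrix (Fin N) (Fin N) ℝ))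
      = U * (diagonal (Real.sqrt ∘ h.1.eigenvalues) * ((star h.1.eigenvectorUnitary : Matrix (Fin N) (Fin N) ℝ) * U)
        * diagonal (Real.sqrt ∘ h.1.eigenvalues)) * (star h.1.eigenvectorUnitary : Matrix (Fin N) (Fin N) ℝ) := by
          simp only [Matrix.mul_assoc]
    _ = A := by
      rw [hUU, Matrix.mul_one, diagonal_mul_diagonal]
      conv_rhs => rw [hspec]
      congr 2
      congr 1
      funext i
      simp [Real.mul_self_sqrt (h.eigenvalues_nonneg i)]

lemma msqrt_of_psd {N : ℕ} {A : Matrix (Fin N) (Fin N) ℝ} (h : A.PosSemidef) :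
    msqrt A = h.sqrt := by
  unfold msqrt
  split <;> rfl

lemma diag_nonneg_of_psd {N : ℕ} {S : Matrix (Fin N) (Fin N) ℝ} (hS : S.PosSemidef)
    (i : Fin N) : 0 ≤ S i i := by
  exact hS.diag_nonneg

/-- Cauchy–Schwarz on the diagonal: (tr √A)² ≤ N · tr A. -/
lemma trace_sqrt_sq_le {N : ℕ} {A : Matrix (Fin N) (Fin N) ℝ} (hA : A.PosSemidef) :
    (hA.sqrt.trace) ^ 2 ≤ N * A.trace := by
  set S := hA.sqrt with hSdef
  have hS : S.PosSemidef := hA.posSemidef_sqrt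
  have hsymm : ∀ i j, S j i = S i j := by
    intro i j
    have := hS.isHermitian
    rw [Matrix.IsHermitian] at this
    have h2 := congrArg (fun m => m j i) this
    simpa [Matrix.conjTranspose_apply] using h2.symm
  have hCS : (∑ i, S i i) ^ 2 ≤ (N : ℝ) * ∑ i, (S i i) ^ 2 := by
    simpa using sq_sum_le_card_mul_sum_sq (s := Finset.univ) (f := fun i => S i i)
  have hdiag : ∑ i, (S i i) ^ 2 ≤ A.trace := by
    have : A.trace = ∑ i, ∑ j, (S i j) ^ 2 := by
      rw [← hA.sqrt_mul_self]
      simp only [Matrix.trace, Matrix.diag, Matrix.mul_apply, ← hSdef]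
      refine Finset.sum_congr rfl fun i _ => Finset.sum_congr rfl fun j _ => ?_
      rw [hsymm i j, sq]
    rw [this]
    refine Finset.sum_le_sum fun i _ => ?_
    exact Finset.single_le_sum (f := fun j => (S i j) ^ 2) (fun j _ => sq_nonneg _) (Finset.mem_univ i)
  calc (S.trace) ^ 2 = (∑ i, S i i) ^ 2 := by rfl
    _ ≤ (N : ℝ) * ∑ i, (S i i) ^ 2 := hCS
    _ ≤ (N : ℝ) * A.trace := by
        exact mul_le_mul_of_nonneg_left hdiag (Nat.cast_nonneg N)

theorem stmt_8 {N : ℕ} (M : Matrix (Fin N) (Fin N) ℝ) (hM : M.PosDef) :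
    (∀ v : Fin N → ℝ, (∀ i, 0 ≤ v i) →
      2 * (msqrt (dhalf v * M * dhalf v)).trace - ∑ i, v i ≤
        2 * Real.sqrt (N * (⨆ i, M i i) * ∑ i, v i) - ∑ i, v i) ∧
    Filter.Tendsto (fun v : Fin N → ℝ => 2 * (msqrt (dhalf v * M * dhalf v)).trace - ∑ i, v i)
      ((Filter.comap (fun v : Fin N → ℝ => ∑ i, v i) Filter.atTop) ⊓
        Filter.principal {v | ∀ i, 0 ≤ v i})
      Filter.atBot := by
  have key : ∀ v : Fin N → ℝ, (∀ i, 0 ≤ v i) →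
      2 * (msqrt (dhalf v * M * dhalf v)).trace - ∑ i, v i ≤
        2 * Real.sqrt (N * (⨆ i, M i i) * ∑ i, v i) - ∑ i, v i := by
    intro v hv
    have hD : (dhalf v)ᴴ = dhalf v := by
      simp [dhalf, Matrix.conjTranspose, Matrix.diagonal_transpose]
    have hA : (dhalf v * M * dhalf v).PosSemidef := by
      have := hM.posSemidef.conjTranspose_mul_mul_same (dhalf v)
      rwa [hD] at this
    rw [msqrt_of_psd hA]
    have htr : (dhalf v * M * dhalf v).trace = ∑ i, v i * M i i := by
      simp only [Matrix.trace, Matrix.diag, dhalf, Matrix.diagonal_mul, Matrix.mul_diagonal]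
      refine Finset.sum_congr rfl fun i _ => ?_
      rw [mul_comm (Real.sqrt (v i)) (M i i), mul_assoc, Real.mul_self_sqrt (hv i)]
      ring
    have hsup : ∀ i, M i i ≤ ⨆ j, M j j := fun i =>
      le_ciSup (f := fun j => M j j) (Set.Finite.bddAbove (Set.finite_range _)) i
    have htr_le : (dhalf v * M * dhalf v).trace ≤ (⨆ i, M i i) * ∑ i, v i := by
      rw [htr, Finset.mul_sum]
      refine Finset.sum_le_sum fun i _ => ?_
      rw [mul_comm ((⨆ j, M j j)) (v i)]
      exact mul_le_mul_of_nonneg_left (hsup i) (hv i)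
    have htrS_nonneg : 0 ≤ hA.sqrt.trace := by
      refine Finset.sum_nonneg fun i _ => diag_nonneg_of_psd hA.posSemidef_sqrt i
    have hle : hA.sqrt.trace ≤ Real.sqrt (N * (⨆ i, M i i) * ∑ i, v i) := by
      rw [show (N : ℝ) * (⨆ i, M i i) * ∑ i, v i = N * ((⨆ i, M i i) * ∑ i, v i) by ring]
      refine Real.le_sqrt_of_sq_le ?_
      calc hA.sqrt.trace ^ 2 ≤ N * (dhalf v * M * dhalf v).trace := trace_sqrt_sq_le hA
        _ ≤ N * ((⨆ i, M i i) * ∑ i, v i) :=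
            mul_le_mul_of_nonneg_left htr_le (Nat.cast_nonneg N)
    linarith
  refine ⟨key, ?_⟩
  set C : ℝ := N * (⨆ i, M i i) with hC
  set s : (Fin N → ℝ) → ℝ := fun v => ∑ i, v i with hs
  set F := (Filter.comap s Filter.atTop) ⊓ Filter.principal {v | ∀ i, 0 ≤ v i} with hF
  have hst : Filter.Tendsto s F Filter.atTop :=
    (Filter.tendsto_comap).mono_left inf_le_left
  have hbound : ∀ᶠ v in F, 2 * (msqrt (dhalf v * M * dhalf v)).trace - s v ≤ -(s v) / 2 := by
    have h1 : ∀ᶠ v in F, ∀ i, 0 ≤ v i := by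
      refine Filter.eventually_inf_principal.mpr ?_
      exact Filter.Eventually.of_forall fun v hv => hv
    have h2 : ∀ᶠ v in F, 16 * |C| ≤ s v := hst.eventually_ge_atTop _
    have h3 : ∀ᶠ v in F, (0 : ℝ) ≤ s v := hst.eventually_ge_atTop _
    filter_upwards [h1, h2, h3] with v hv hsv hs0
    have hkey := key v hv
    have hsq : Real.sqrt (C * s v) ≤ s v / 4 := by
      have harg : C * s v ≤ (s v / 4) ^ 2 := by
        calc C * s v ≤ |C| * s v := mul_le_mul_of_nonneg_right (le_abs_self C) hs0
          _ ≤ (s v / 16) * s v := mul_le_mul_of_nonneg_right (by linarith) hs0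
          _ ≤ (s v / 4) ^ 2 := by nlinarith
      calc Real.sqrt (C * s v) ≤ Real.sqrt ((s v / 4) ^ 2) := Real.sqrt_le_sqrt harg
        _ = s v / 4 := Real.sqrt_sq (by linarith)
    calc 2 * (msqrt (dhalf v * M * dhalf v)).trace - s v
        ≤ 2 * Real.sqrt (C * s v) - s v := hkey
      _ ≤ 2 * (s v / 4) - s v := by linarith
      _ = -(s v) / 2 := by ring
  have hneg : Filter.Tendsto (fun v => -(s v) / 2) F Filter.atBot := by
    have h1 : Filter.Tendsto (fun x : ℝ => -x / 2) Filter.atTop Filter.atBot :=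
      tendsto_neg_atTop_atBot.atBot_div_const (by norm_num)
    exact h1.comp hst
  exact tendsto_atBot_mono' F hbound hneg
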